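/- arXiv:2404.04236 — 2 statements merged into one kernel-verified Lean document; each statement's English description precedes it below -/
import Mathlib

section
/- Let Q ∈ ℝ^{n×n} be symmetric positive definite, and let S ⊆ T ⊆ [n]. Then (Q ∘ e_T e_T⊤)† ⪰ (Q ∘ e_S e_S⊤)† in the Loewner order, where M† denotes the Moore–Penrose pseudoinverse and e_S is the 0/1 indicator vector of S. -/
/-!
Write `P_S` for the diagonal `0/1` projection onto the coordinates in `S`, so that
`mask Q S = P_S Q P_S`, whose pseudoinverse is `B_S = P_S (P_S Q P_S + 1 - P_S)⁻¹` (it satisfies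
the four Penrose equations, which determine the pseudoinverse uniquely).
For `S ⊆ T` and `M = P_T Q P_T`, the relations `M B_T = B_T M = P_T` and `B_S = P_S B_S = B_S P_S`
give `B_T M B_T = B_T` and `B_T M B_S = B_S M B_T = B_S M B_S = B_S`. Hence `D = B_T - B_S`
satisfies `D = D M D`, which is positive semidefinite because `M` is.
-/

open Matrix
open scoped Classical

/-- The Moore–Penrose pseudoinverse of a real square matrix, defined via its four
characterizing equations (and `0` if no such matrix exists; by uniqueness of the
Moore–Penrose pseudoinverse, when it exists this definition picks it out). -/
noncomputable def pinv {m : Type*} [Fintype m] [DecidableEq m]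
    (A : Matrix m m ℝ) : Matrix m m ℝ :=
  if h : ∃ B : Matrix m m ℝ,
      A * B * A = A ∧ B * A * B = B ∧ (A * B)ᵀ = A * B ∧ (B * A)ᵀ = B * A
  then h.choose else 0

/-- `Q ∘ e_S e_Sᵀ`: the matrix agreeing with `Q` on entries indexed by `S × S`,
and zero elsewhere. -/
def mask {n : ℕ} (Q : Matrix (Fin n) (Fin n) ℝ) (S : Finset (Fin n)) :
    Matrix (Fin n) (Fin n) ℝ :=
  Matrix.of fun i j => if i ∈ S ∧ j ∈ S then Q i j else 0

section MoorePenrose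

variable {R : Type*} [Monoid R] [StarMul R]

theorem moorePenrose_inverse_unique {a b c : R}
    (hb : a * b * a = a ∧ b * a * b = b ∧ IsSelfAdjoint (a * b) ∧ IsSelfAdjoint (b * a))
    (hc : a * c * a = a ∧ c * a * c = c ∧ IsSelfAdjoint (a * c) ∧ IsSelfAdjoint (c * a)) :
    b = c := by
  obtain ⟨hb₁, hb₂, hb₃, hb₄⟩ := hb
  obtain ⟨hc₁, hc₂, hc₃, hc₄⟩ := hc
  have hab : a * b = a * c := calc
    a * b = star (a * c) * star (a * b) := by rw [hc₃.star_eq, hb₃.star_eq, ← mul_assoc, hc₁]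
    _ = a * c := by rw [← star_mul, ← mul_assoc, hb₁, hc₃.star_eq]
  have hba : b * a = c * a := calc
    b * a = star (b * a) * star (c * a) := by
      rw [hb₄.star_eq, hc₄.star_eq, mul_assoc b a, ← mul_assoc a c a, hc₁]
    _ = c * a := by rw [← star_mul, mul_assoc c a, ← mul_assoc a b a, hb₁, hc₄.star_eq]
  calc b = b * (a * b) := by rw [← mul_assoc, hb₂]
    _ = c := by rw [hab, ← mul_assoc, hba, hc₂]

end MoorePenrose

theorem pinv_eq_of_penrose {m : Type*} [Fintype m] [DecidableEq m] {A B : Matrix m m ℝ}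
    (hB : A * B * A = A ∧ B * A * B = B ∧ (A * B)ᵀ = A * B ∧ (B * A)ᵀ = B * A) :
    pinv A = B := by
  have h : ∃ B : Matrix m m ℝ,
      A * B * A = A ∧ B * A * B = B ∧ (A * B)ᵀ = A * B ∧ (B * A)ᵀ = B * A := ⟨B, hB⟩
  rw [pinv, dif_pos h]
  simp only [← conjTranspose_eq_transpose_of_trivial] at hB h
  exact moorePenrose_inverse_unique h.choose_spec hB

namespace Matrix

section Compression

variable {m K : Type*} [Fintype m] [DecidableEq m] [Field K] {A P P' : Matrix m m K}

theorem mul_compression_add (hP : IsIdempotentElem P) :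
    P * (P * A * P + (1 - P)) = P * A * P := by
  rw [mul_add, mul_sub, mul_one, hP.eq, sub_self, add_zero, ← mul_assoc, ← mul_assoc, hP.eq]

theorem compression_add_mul (hP : IsIdempotentElem P) :
    (P * A * P + (1 - P)) * P = P * A * P := by
  rw [add_mul, sub_mul, one_mul, hP.eq, sub_self, add_zero, mul_assoc, hP.eq]

/-- The inverse of `P * A * P` on the range of `P`: adding `1 - P` makes the compression
invertible without changing it there. -/
noncomputable def compressionInv (A P : Matrix m m K) : Matrix m m K :=
  P * (P * A * P + (1 - P))⁻¹

theorem mul_compressionInv_of_mul_eq (hPP' : P' * P = P) :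
    P' * compressionInv A P = compressionInv A P := by
  rw [compressionInv, ← mul_assoc, hPP']

variable [PartialOrder K] [StarRing K]

theorem isUnit_det_compression_add (hA : A.PosDef) (hP : IsStarProjection P) :
    IsUnit (P * A * P + (1 - P)).det := by
  refine isUnit_iff_ne_zero.mpr fun hdet => ?_
  obtain ⟨v, hv, hNv⟩ := exists_mulVec_eq_zero_iff.mpr hdet
  have hPAP : (P * A * P) *ᵥ v = 0 := by
    rw [← mul_compression_add hP.isIdempotentElem, ← mulVec_mulVec, hNv, mulVec_zero]
  have hPv : P *ᵥ v = 0 := by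
    by_contra h
    have hpos := hA.dotProduct_mulVec_pos h
    have hPstar : Pᴴ = P := hP.isSelfAdjoint
    rw [star_mulVec, ← dotProduct_mulVec, hPstar, mulVec_mulVec, mulVec_mulVec,
      hPAP, dotProduct_zero] at hpos
    exact lt_irrefl _ hpos
  apply hv
  simpa [add_mulVec, sub_mulVec, hPAP, hPv] using hNv

theorem compressionInv_eq_inv_mul (hA : A.PosDef) (hP : IsStarProjection P) :
    compressionInv A P = (P * A * P + (1 - P))⁻¹ * P := by
  set N := P * A * P + (1 - P)
  have hN := isUnit_det_compression_add hA hP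
  calc P * N⁻¹ = N⁻¹ * (N * P) * N⁻¹ := by rw [← mul_assoc, nonsing_inv_mul _ hN, one_mul]
    _ = N⁻¹ * (P * N) * N⁻¹ := by
      rw [compression_add_mul hP.isIdempotentElem, mul_compression_add hP.isIdempotentElem]
    _ = N⁻¹ * P := by rw [mul_assoc, mul_assoc, mul_nonsing_inv _ hN, mul_one]

theorem compression_mul_compressionInv (hA : A.PosDef) (hP : IsStarProjection P) :
    P * A * P * compressionInv A P = P := by
  have hPN := mul_compression_add (A := A) hP.isIdempotentElem
  have hN := isUnit_det_compression_add hA hP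
  rw [compressionInv]
  generalize P * A * P + (1 - P) = N at hPN hN ⊢
  rw [← mul_assoc, mul_assoc (P * A), hP.isIdempotentElem.eq, ← hPN, mul_assoc,
    mul_nonsing_inv _ hN, mul_one]

theorem compressionInv_mul_compression (hA : A.PosDef) (hP : IsStarProjection P) :
    compressionInv A P * (P * A * P) = P := by
  have hNP := compression_add_mul (A := A) hP.isIdempotentElem
  have hN := isUnit_det_compression_add hA hP
  rw [compressionInv_eq_inv_mul hA hP]
  generalize P * A * P + (1 - P) = N at hNP hN ⊢
  have hPPAP : P * (P * A * P) = P * A * P := by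
    rw [← mul_assoc, ← mul_assoc, hP.isIdempotentElem.eq]
  rw [mul_assoc, hPPAP, ← hNP, ← mul_assoc, nonsing_inv_mul _ hN, one_mul]

theorem compressionInv_mul_of_mul_eq (hA : A.PosDef) (hP : IsStarProjection P)
    (hP' : IsSelfAdjoint P') (hPP' : P' * P = P) :
    compressionInv A P * P' = compressionInv A P := by
  have hPP'' : P * P' = P := by
    simpa only [star_mul, hP.isSelfAdjoint.star_eq, hP'.star_eq] using congrArg star hPP'
  rw [compressionInv_eq_inv_mul hA hP, mul_assoc, hPP'']

theorem isHermitian_compressionInv (hA : A.PosDef) (hP : IsStarProjection P) :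
    (compressionInv A P).IsHermitian := by
  have hPstar : Pᴴ = P := hP.isSelfAdjoint
  have hN : (P * A * P + (1 - P))ᴴ = P * A * P + (1 - P) := by
    simp only [conjTranspose_add, conjTranspose_sub, conjTranspose_mul, conjTranspose_one,
      hPstar, hA.isHermitian.eq, mul_assoc]
  rw [IsHermitian, compressionInv, conjTranspose_mul, conjTranspose_nonsing_inv, hN, hPstar,
    ← compressionInv_eq_inv_mul hA hP, compressionInv]

theorem compressionInv_mul_compression_mul_compressionInv (hA : A.PosDef)
    (hP : IsStarProjection P) (hP' : IsSelfAdjoint P') (hPP' : P' * P = P) :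
    compressionInv A P * (P' * A * P') * compressionInv A P = compressionInv A P := by
  set B := compressionInv A P
  calc B * (P' * A * P') * B = B * P' * A * (P' * B) := by simp only [mul_assoc]
    _ = B * P * A * (P * B) := by
      rw [compressionInv_mul_of_mul_eq hA hP hP' hPP', mul_compressionInv_of_mul_eq hPP',
        compressionInv_mul_of_mul_eq hA hP hP.isSelfAdjoint hP.isIdempotentElem.eq,
        mul_compressionInv_of_mul_eq hP.isIdempotentElem.eq]
    _ = B * (P * A * P) * B := by simp only [mul_assoc]
    _ = B := by
      rw [compressionInv_mul_compression hA hP, mul_compressionInv_of_mul_eq hP.isIdempotentElem.eq]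

theorem posSemidef_compressionInv_sub (hA : A.PosDef) (hP : IsStarProjection P)
    (hP' : IsStarProjection P') (hPP' : P' * P = P) :
    (compressionInv A P' - compressionInv A P).PosSemidef := by
  set B' := compressionInv A P'
  set B := compressionInv A P
  set M := P' * A * P'
  have hD : (B' - B) * M * (B' - B) = B' - B := by
    have hB'B : B' * M * B = B := by
      rw [compressionInv_mul_compression hA hP', mul_compressionInv_of_mul_eq hPP']
    have hBB' : B * M * B' = B := by
      rw [mul_assoc, compression_mul_compressionInv hA hP',
        compressionInv_mul_of_mul_eq hA hP hP'.isSelfAdjoint hPP']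
    rw [sub_mul, sub_mul, mul_sub, mul_sub, hB'B, hBB',
      compressionInv_mul_compression_mul_compressionInv hA hP hP'.isSelfAdjoint hPP',
      compressionInv_mul_compression_mul_compressionInv hA hP' hP'.isSelfAdjoint
        hP'.isIdempotentElem.eq]
    abel
  have hDstar : (B' - B)ᴴ = B' - B :=
    ((isHermitian_compressionInv hA hP').sub (isHermitian_compressionInv hA hP)).eq
  have hM : M.PosSemidef := by
    have hP'star : P'ᴴ = P' := hP'.isSelfAdjoint
    simpa only [hP'star] using hA.posSemidef.conjTranspose_mul_mul_same P'
  simpa only [hDstar, hD] using hM.conjTranspose_mul_mul_same (B' - B)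

end Compression

section CoordProj

variable {ι R : Type*} [Fintype ι] [DecidableEq ι]

def coordProj [Zero R] [One R] (S : Finset ι) : Matrix ι ι R :=
  diagonal fun i => if i ∈ S then 1 else 0

theorem isStarProjection_coordProj [Semiring R] [StarRing R] (S : Finset ι) :
    IsStarProjection (coordProj S : Matrix ι ι R) := by
  rw [isStarProjection_iff', coordProj, diagonal_mul_diagonal, star_eq_conjTranspose,
    diagonal_conjTranspose]
  constructor <;> congr 1 <;> ext i <;> by_cases hi : i ∈ S <;> simp [hi]

theorem coordProj_mul_coordProj_of_subset [NonAssocSemiring R] {S T : Finset ι} (h : S ⊆ T) :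
    (coordProj T * coordProj S : Matrix ι ι R) = coordProj S := by
  rw [coordProj, coordProj, diagonal_mul_diagonal]
  congr 1
  ext i
  by_cases hi : i ∈ S
  · simp [hi, h hi]
  · simp [hi]

end CoordProj

end Matrix

theorem pinv_compression {m : Type*} [Fintype m] [DecidableEq m] {A P : Matrix m m ℝ}
    (hA : A.PosDef) (hP : IsStarProjection P) :
    pinv (P * A * P) = compressionInv A P := by
  have hPt : Pᵀ = P := hP.isSelfAdjoint
  refine pinv_eq_of_penrose ⟨?_, ?_, ?_, ?_⟩
  · rw [compression_mul_compressionInv hA hP, ← mul_assoc, ← mul_assoc, hP.isIdempotentElem.eq]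
  · rw [compressionInv_mul_compression hA hP, mul_compressionInv_of_mul_eq hP.isIdempotentElem.eq]
  · rw [compression_mul_compressionInv hA hP, hPt]
  · rw [compressionInv_mul_compression hA hP, hPt]

theorem mask_eq_coordProj_mul_mul {n : ℕ} (Q : Matrix (Fin n) (Fin n) ℝ) (S : Finset (Fin n)) :
    mask Q S = coordProj S * Q * coordProj S := by
  ext i j
  by_cases hi : i ∈ S <;> by_cases hj : j ∈ S <;> simp [mask, coordProj, hi, hj]

/-- for `Q` symmetric positive definite and `S ⊆ T`, the pseudoinverse of the
restriction of `Q` to `T` dominates that of the restriction to `S` in the Loewner order. -/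
theorem stmt6 {n : ℕ} (Q : Matrix (Fin n) (Fin n) ℝ) (hQ : Q.PosDef)
    (S T : Finset (Fin n)) (hST : S ⊆ T) :
    (pinv (mask Q T) - pinv (mask Q S)).PosSemidef := by
  rw [mask_eq_coordProj_mul_mul, mask_eq_coordProj_mul_mul,
    pinv_compression hQ (isStarProjection_coordProj T),
    pinv_compression hQ (isStarProjection_coordProj S)]
  exact posSemidef_compressionInv_sub hQ (isStarProjection_coordProj S)
    (isStarProjection_coordProj T) (coordProj_mul_coordProj_of_subset hST)
end

section
/- Let Q be an n×n Stieltjes matrix (symmetric positive definite with nonpositive off-diagonal entries). For fixed i, j ∈ [n], define the set function θ_{ij}(S) = ((Q ∘ e_S e_S⊤)†)_{ij} for S ⊆ [n]. Then θ_{ij} is nondecreasing: for S ⊆ T ⊆ [n], θ_{ij}(S) ≤ θ_{ij}(T). -/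
open Matrix
open scoped Classical

/-!
A Stieltjes matrix `A` is inverse-positive in a strong sense: `A w ≥ 0` forces `w ≥ 0`, since
the quadratic form of `A` at the negative part of `w` is at most zero. Hence `A⁻¹ ≥ 0`, and for a
principal submatrix `B = A[S, S]` the vector `A⁻¹ e_j - (B⁻¹ e_j extended by zero)` is mapped by
`A` to a nonnegative vector (zero on `S`, and `-∑ A_{is} (B⁻¹)_{sj} ≥ 0` off `S`), so
`(B⁻¹)_{ij} ≤ (A⁻¹)_{ij}`. Finally, `Q ∘ e_S e_Sᵀ` is `Q[S, S]` extended by zero, and its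
Moore–Penrose pseudoinverse is `Q[S, S]⁻¹` extended by zero.
-/

section MoorePenrose

variable {m : Type*} [Fintype m]

def IsMoorePenroseInverse (A B : Matrix m m ℝ) : Prop :=
  A * B * A = A ∧ B * A * B = B ∧ (A * B)ᵀ = A * B ∧ (B * A)ᵀ = B * A

theorem IsMoorePenroseInverse.unique {A B C : Matrix m m ℝ} (hB : IsMoorePenroseInverse A B)
    (hC : IsMoorePenroseInverse A C) : B = C := by
  obtain ⟨hB₁, hB₂, hB₃, hB₄⟩ := hB
  obtain ⟨hC₁, hC₂, hC₃, hC₄⟩ := hC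
  have hAB : A * B = A * C :=
    calc A * B = (A * C) * (A * B) := by rw [← Matrix.mul_assoc, hC₁]
      _ = ((A * B) * (A * C))ᵀ := by rw [transpose_mul, hB₃, hC₃]
      _ = A * C := by rw [← Matrix.mul_assoc, hB₁, hC₃]
  have hBA : B * A = C * A :=
    calc B * A = (B * A) * (C * A) := by rw [Matrix.mul_assoc B, ← Matrix.mul_assoc A, hC₁]
      _ = ((C * A) * (B * A))ᵀ := by rw [transpose_mul, hB₄, hC₄]
      _ = C * A := by rw [Matrix.mul_assoc C, ← Matrix.mul_assoc A, hB₁, hC₄]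
  calc B = B * A * C := by rw [Matrix.mul_assoc, ← hAB, ← Matrix.mul_assoc, hB₂]
    _ = C := by rw [hBA, hC₂]

theorem pinv_eq_of_isMoorePenroseInverse [DecidableEq m] {A B : Matrix m m ℝ}
    (hB : IsMoorePenroseInverse A B) : pinv A = B := by
  have h : ∃ B, IsMoorePenroseInverse A B := ⟨B, hB⟩
  rw [pinv]
  exact (dif_pos h).trans (h.choose_spec.unique hB)

end MoorePenrose

namespace Matrix

variable {ι κ R : Type*}

section ExtendByZero

variable [Fintype κ] [DecidableEq ι]

/-- `E M Eᵀ`, where `E : Matrix ι κ R` is the 0/1 matrix of the coordinate embedding along `f`. -/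
def extendByZero [CommSemiring R] (f : κ → ι) (M : Matrix κ κ R) : Matrix ι ι R :=
  (1 : Matrix ι ι R).submatrix id f * M * (1 : Matrix ι ι R).submatrix f id

variable [CommSemiring R] {f : κ → ι}

theorem submatrix_extendByZero (hf : Function.Injective f) (M : Matrix κ κ R) :
    (extendByZero f M).submatrix f f = M := by
  rw [extendByZero, submatrix_mul _ _ _ _ _ Function.bijective_id,
    submatrix_mul _ _ _ _ _ Function.bijective_id]
  simp [submatrix_one _ hf]

theorem extendByZero_apply_apply (hf : Function.Injective f) (M : Matrix κ κ R) (a b : κ) :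
    extendByZero f M (f a) (f b) = M a b :=
  congrFun₂ (submatrix_extendByZero hf M) a b

theorem extendByZero_apply_of_notMem_range (M : Matrix κ κ R) {i j : ι}
    (h : i ∉ Set.range f ∨ j ∉ Set.range f) : extendByZero f M i j = 0 := by
  rcases h with h | h
  · have : ∀ a, i ≠ f a := fun a hia => h ⟨a, hia.symm⟩
    simp [extendByZero, mul_apply, one_apply, this]
  · have : ∀ b, f b ≠ j := fun b hbj => h ⟨b, hbj⟩
    simp [extendByZero, mul_apply, one_apply, this]

theorem extendByZero_nonneg [PartialOrder R] [IsOrderedRing R] {M : Matrix κ κ R}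
    (hM : ∀ a b, 0 ≤ M a b) (i j : ι) : 0 ≤ extendByZero f M i j := by
  have hE : ∀ i k : ι, (0 : R) ≤ (1 : Matrix ι ι R) i k := fun i k => by
    rw [one_apply]; split_ifs <;> simp
  exact Finset.sum_nonneg fun b _ => mul_nonneg
    (Finset.sum_nonneg fun a _ => mul_nonneg (hE _ _) (hM a b)) (hE _ _)

theorem extendByZero_mul [Fintype ι] (hf : Function.Injective f) (M N : Matrix κ κ R) :
    extendByZero f M * extendByZero f N = extendByZero f (M * N) := by
  have h : (1 : Matrix ι ι R).submatrix f id * (1 : Matrix ι ι R).submatrix id f = 1 := by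
    rw [← submatrix_mul _ _ _ _ _ Function.bijective_id, Matrix.one_mul, submatrix_one _ hf]
  simp only [extendByZero, Matrix.mul_assoc]
  rw [← Matrix.mul_assoc _ (submatrix 1 id f), h, Matrix.one_mul]

theorem transpose_extendByZero (M : Matrix κ κ R) :
    (extendByZero f M)ᵀ = extendByZero f Mᵀ := by
  simp [extendByZero, transpose_mul, transpose_submatrix, Matrix.mul_assoc]

end ExtendByZero

theorem pinv_extendByZero [Fintype ι] [DecidableEq ι] [Fintype κ] [DecidableEq κ] {f : κ → ι}
    (hf : Function.Injective f) {M : Matrix κ κ ℝ} (hM : IsUnit M.det) :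
    pinv (extendByZero f M) = extendByZero f M⁻¹ := by
  apply pinv_eq_of_isMoorePenroseInverse
  simp only [IsMoorePenroseInverse, extendByZero_mul hf, transpose_extendByZero,
    mul_nonsing_inv _ hM, nonsing_inv_mul _ hM, Matrix.one_mul, transpose_one, and_self]

def IsStieltjes (A : Matrix ι ι ℝ) : Prop :=
  A.PosDef ∧ ∀ i j, i ≠ j → A i j ≤ 0

namespace IsStieltjes

variable {A : Matrix ι ι ℝ}

theorem submatrix (hA : A.IsStieltjes) {f : κ → ι} (hf : Function.Injective f) :
    (A.submatrix f f).IsStieltjes :=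
  ⟨hA.1.submatrix hf, fun _ _ hkl => hA.2 _ _ (hf.ne hkl)⟩

section

variable [Fintype ι]

theorem nonneg_of_mulVec_nonneg (hA : A.IsStieltjes) {w : ι → ℝ} (hw : 0 ≤ A *ᵥ w) :
    0 ≤ w := by
  set y : ι → ℝ := fun k => min (w k) 0 with hy_def
  have hy : ∀ k, y k ≤ 0 := fun k => min_le_right _ _
  have hwy : ∀ k, 0 ≤ (w - y) k := fun k => sub_nonneg.2 (min_le_left _ _)
  have hdisj : ∀ k, y k * (w - y) k = 0 := fun k => by
    rcases le_total (w k) 0 with h | h <;> simp [hy_def, h]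
  have h₁ : y ⬝ᵥ A *ᵥ w ≤ 0 :=
    Finset.sum_nonpos fun k _ => mul_nonpos_of_nonpos_of_nonneg (hy k) (hw k)
  have h₂ : 0 ≤ y ⬝ᵥ A *ᵥ (w - y) := by
    simp only [dotProduct, mulVec, Finset.mul_sum]
    refine Finset.sum_nonneg fun k _ => Finset.sum_nonneg fun l _ => ?_
    rcases eq_or_ne k l with rfl | hkl
    · rw [mul_left_comm, hdisj, mul_zero]
    · exact mul_nonneg_of_nonpos_of_nonpos (hy k)
        (mul_nonpos_of_nonpos_of_nonneg (hA.2 k l hkl) (hwy l))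
  have hy0 : y = 0 := by
    by_contra hne
    have hpos := hA.1.dotProduct_mulVec_pos hne
    have hsplit : y ⬝ᵥ A *ᵥ y = y ⬝ᵥ A *ᵥ w - y ⬝ᵥ A *ᵥ (w - y) := by
      rw [mulVec_sub, dotProduct_sub, sub_sub_cancel]
    rw [star_trivial, hsplit] at hpos
    linarith
  exact fun k => min_eq_right_iff.1 (congrFun hy0 k)

theorem nonneg_of_mul_nonneg (hA : A.IsStieltjes) [Fintype κ] {C : Matrix ι κ ℝ}
    (hC : ∀ i k, 0 ≤ (A * C) i k) (i : ι) (k : κ) : 0 ≤ C i k :=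
  hA.nonneg_of_mulVec_nonneg (w := fun i => C i k) (fun i => hC i k) i

variable [DecidableEq ι]

theorem isUnit_det (hA : A.IsStieltjes) : IsUnit A.det :=
  (isUnit_iff_isUnit_det A).1 hA.1.isUnit

theorem inv_nonneg (hA : A.IsStieltjes) (i j : ι) : 0 ≤ A⁻¹ i j :=
  hA.nonneg_of_mul_nonneg (fun i j => by
    rw [mul_nonsing_inv _ hA.isUnit_det, one_apply]
    split_ifs <;> norm_num) i j

theorem inv_submatrix_le (hA : A.IsStieltjes) [Fintype κ] [DecidableEq κ] {f : κ → ι}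
    (hf : Function.Injective f) (k l : κ) : (A.submatrix f f)⁻¹ k l ≤ A⁻¹ (f k) (f l) := by
  set B := A.submatrix f f
  have hB := hA.submatrix hf
  set C : Matrix ι κ ℝ := A⁻¹.submatrix id f - (1 : Matrix ι ι ℝ).submatrix id f * B⁻¹
  have hAC : A * C = (1 : Matrix ι ι ℝ).submatrix id f - A.submatrix id f * B⁻¹ := by
    have hmul : ∀ X : Matrix ι ι ℝ, A * X.submatrix id f = (A * X).submatrix id f := fun X => by
      rw [submatrix_mul _ _ _ _ _ Function.bijective_id, submatrix_id_id]
    rw [Matrix.mul_sub, ← Matrix.mul_assoc, hmul, hmul, Matrix.mul_one,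
      mul_nonsing_inv A hA.isUnit_det]
  have hC : ∀ i l, 0 ≤ (A * C) i l := by
    intro i l
    rw [hAC]
    by_cases hi : ∃ k, f k = i
    · obtain ⟨k, rfl⟩ := hi
      have : (A.submatrix id f * B⁻¹) (f k) l = (B * B⁻¹) k l := rfl
      rw [sub_apply, this, mul_nonsing_inv _ hB.isUnit_det]
      simp [one_apply, hf.eq_iff]
    · push Not at hi
      have h₀ : (1 : Matrix ι ι ℝ).submatrix id f i l = 0 := one_apply_ne (hi l).symm
      have : (A.submatrix id f * B⁻¹) i l ≤ 0 :=
        Finset.sum_nonpos fun k _ =>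
          mul_nonpos_of_nonpos_of_nonneg (hA.2 _ _ (hi k).symm) (hB.inv_nonneg k l)
      rw [sub_apply, h₀]
      linarith
  have hE : ((1 : Matrix ι ι ℝ).submatrix id f * B⁻¹) (f k) l = B⁻¹ k l := by
    change ((1 : Matrix ι ι ℝ).submatrix f f * B⁻¹) k l = _
    rw [submatrix_one _ hf, Matrix.one_mul]
  have := hA.nonneg_of_mul_nonneg hC (f k) l
  simp only [C, sub_apply, hE, submatrix_apply, id] at this
  linarith

end

theorem extendByZero_inv_le_of_subset [DecidableEq ι] (hA : A.IsStieltjes) {S T : Finset ι}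
    (hST : S ⊆ T) (i j : ι) :
    extendByZero ((↑) : S → ι) (A.submatrix (↑) (↑))⁻¹ i j ≤
      extendByZero ((↑) : T → ι) (A.submatrix (↑) (↑))⁻¹ i j := by
  have hT := hA.submatrix (Subtype.val_injective (p := (· ∈ T)))
  by_cases h : i ∈ S ∧ j ∈ S
  · have hincl : Function.Injective fun a : S => (⟨a, hST a.2⟩ : T) :=
      fun _ _ hab => Subtype.ext (congrArg ((↑) : T → ι) hab)
    exact (extendByZero_apply_apply Subtype.val_injective _ ⟨i, h.1⟩ ⟨j, h.2⟩).trans_le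
      ((hT.inv_submatrix_le hincl ⟨i, h.1⟩ ⟨j, h.2⟩).trans_eq
        (extendByZero_apply_apply Subtype.val_injective _ _ _).symm)
  · rw [extendByZero_apply_of_notMem_range]
    · exact extendByZero_nonneg hT.inv_nonneg i j
    · simpa only [Subtype.range_coe_subtype, Set.mem_ofPred_eq] using not_and_or.1 h

end IsStieltjes

end Matrix

theorem mask_eq_extendByZero {n : ℕ} (Q : Matrix (Fin n) (Fin n) ℝ) (S : Finset (Fin n)) :
    mask Q S = extendByZero ((↑) : S → Fin n) (Q.submatrix ((↑) : S → Fin n) (↑)) := by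
  ext i j
  by_cases h : i ∈ S ∧ j ∈ S
  · rw [mask, of_apply, if_pos h]
    exact (extendByZero_apply_apply Subtype.val_injective (Q.submatrix ((↑) : S → Fin n) (↑))
      ⟨i, h.1⟩ ⟨j, h.2⟩).symm
  · rw [mask, of_apply, if_neg h, extendByZero_apply_of_notMem_range]
    simpa only [Subtype.range_coe_subtype, Set.mem_ofPred_eq] using not_and_or.1 h

/-- for a Stieltjes matrix `Q`, the set function
`θ_{ij}(S) = ((Q ∘ e_S e_Sᵀ)†)_{ij}` is nondecreasing under inclusion. -/
theorem stmt7 {n : ℕ} (Q : Matrix (Fin n) (Fin n) ℝ)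
    (hQ : Q.PosDef) (hoff : ∀ i j : Fin n, i ≠ j → Q i j ≤ 0)
    (i j : Fin n) (S T : Finset (Fin n)) (hST : S ⊆ T) :
    pinv (mask Q S) i j ≤ pinv (mask Q T) i j := by
  have hQS : Q.IsStieltjes := ⟨hQ, hoff⟩
  have hdet (U : Finset (Fin n)) : IsUnit (Q.submatrix ((↑) : U → Fin n) (↑)).det :=
    (hQS.submatrix Subtype.val_injective).isUnit_det
  rw [mask_eq_extendByZero, mask_eq_extendByZero, pinv_extendByZero Subtype.val_injective (hdet S),
    pinv_extendByZero Subtype.val_injective (hdet T)]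
  exact hQS.extendByZero_inv_le_of_subset hST i j
end
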